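/- Let W : ℝ^{3×3} → [0,∞] satisfy W(RF) = W(F) for all R ∈ SO(3), W = 0 on SO(3), and W(F) ≤ C dist²(F, SO(3)) on a neighborhood of SO(3). Let G be a smooth metric on Ω^h = ω × (−h/2, h/2) and suppose u^h : Ω^h → ℝ³ is smooth with (∇u^h)ᵀ∇u^h = G + E_h where sup|E_h| ≤ C₀h^{n+1} and ∇u^h has positive determinant. Then for all sufficiently small h: (1/h)∫_{Ω^h} W((∇u^h)G^{-1/2}) dx ≤ C' h^{2(n+1)} |ω|, with C' depending only on C₀, C, and bounds on G. -/

import Mathlib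

open Matrix MeasureTheory

/-- Frobenius norm of a 3×3 real matrix. -/
noncomputable def frobNorm (M : Matrix (Fin 3) (Fin 3) ℝ) : ℝ :=
  Real.sqrt (∑ i : Fin 3, ∑ j : Fin 3, (M i j) ^ 2)

/-- Distance of a matrix to SO(3). -/
noncomputable def distSO3 (F : Matrix (Fin 3) (Fin 3) ℝ) : ℝ :=
  sInf {d : ℝ | ∃ R : Matrix (Fin 3) (Fin 3) ℝ,
    Rᵀ * R = 1 ∧ R.det = 1 ∧ d = frobNorm (F - R)}

/-- The thin film `Ω^h = ω × (−h/2, h/2)`. -/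
def thinFilm (ω : Set (Fin 2 → ℝ)) (h : ℝ) : Set (Fin 3 → ℝ) :=
  {x | (fun i : Fin 2 => x i.castSucc) ∈ ω ∧ |x 2| < h / 2}

/-- Gradient (Jacobian matrix) of a map `ℝ³ → ℝ³`. -/
noncomputable def grad3 (u : (Fin 3 → ℝ) → Fin 3 → ℝ) (x : Fin 3 → ℝ) :
    Matrix (Fin 3) (Fin 3) ℝ :=
  Matrix.of fun a j => fderiv ℝ (fun y => u y a) x (Pi.single j 1)

namespace EnergyAux
noncomputable def fsq (M : Matrix (Fin 3) (Fin 3) ℝ) : ℝ := ∑ i, ∑ j, (M i j)^2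

lemma fsq_nonneg (M : Matrix (Fin 3) (Fin 3) ℝ) : 0 ≤ fsq M :=
  Finset.sum_nonneg fun _ _ => Finset.sum_nonneg fun _ _ => sq_nonneg _

lemma frobNorm_def (M : Matrix (Fin 3) (Fin 3) ℝ) : frobNorm M = Real.sqrt (fsq M) := rfl

lemma frobNorm_nonneg (M : Matrix (Fin 3) (Fin 3) ℝ) : 0 ≤ frobNorm M := Real.sqrt_nonneg _

lemma fsq_eq_trace (M : Matrix (Fin 3) (Fin 3) ℝ) : fsq M = Matrix.trace (Mᵀ * M) := by
  simp only [fsq, Matrix.trace, Matrix.diag, Matrix.mul_apply, Matrix.transpose_apply, sq]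
  exact Finset.sum_comm

lemma fsq_rot {R : Matrix (Fin 3) (Fin 3) ℝ} (hR : Rᵀ * R = 1)
    (M : Matrix (Fin 3) (Fin 3) ℝ) : fsq (R * M) = fsq M := by
  rw [fsq_eq_trace, fsq_eq_trace, transpose_mul, mul_assoc, ← mul_assoc Rᵀ R M, hR, one_mul]

lemma fsq_mul_le (A B : Matrix (Fin 3) (Fin 3) ℝ) : fsq (A * B) ≤ fsq A * fsq B := by
  have h1 : ∀ i j, ((A*B) i j)^2 ≤ (∑ k, (A i k)^2) * (∑ k, (B k j)^2) := fun i j => by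
    simpa [Matrix.mul_apply] using
      Finset.sum_mul_sq_le_sq_mul_sq Finset.univ (fun k => A i k) (fun k => B k j)
  calc fsq (A*B) ≤ ∑ i, ∑ j, (∑ k, (A i k)^2) * (∑ k, (B k j)^2) :=
        Finset.sum_le_sum fun i _ => Finset.sum_le_sum fun j _ => h1 i j
    _ = (∑ i, ∑ k, (A i k)^2) * (∑ j, ∑ k, (B k j)^2) := (Finset.sum_mul_sum _ _ _ _).symm
    _ = fsq A * fsq B := by rw [fsq, fsq]; congr 1; exact Finset.sum_comm

lemma frobNorm_mul_le (A B : Matrix (Fin 3) (Fin 3) ℝ) :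
    frobNorm (A * B) ≤ frobNorm A * frobNorm B := by
  rw [frobNorm_def, frobNorm_def, frobNorm_def, ← Real.sqrt_mul (fsq_nonneg A)]
  exact Real.sqrt_le_sqrt (fsq_mul_le A B)

lemma frobNorm_le_of_entry_le {M : Matrix (Fin 3) (Fin 3) ℝ} {c : ℝ} (hc : 0 ≤ c)
    (h : ∀ i j, |M i j| ≤ c) : frobNorm M ≤ 3 * c := by
  have h2 : fsq M ≤ 9 * c^2 := by
    calc fsq M ≤ ∑ _i : Fin 3, ∑ _j : Fin 3, c^2 :=
          Finset.sum_le_sum fun i _ => Finset.sum_le_sum fun j _ => by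
            rw [← sq_abs]; exact pow_le_pow_left₀ (abs_nonneg _) (h i j) 2
      _ = 9 * c^2 := by simp; ring
  rw [frobNorm_def]
  calc Real.sqrt (fsq M) ≤ Real.sqrt ((3*c)^2) := Real.sqrt_le_sqrt (by nlinarith)
    _ = 3 * c := Real.sqrt_sq (by positivity)

lemma trace_nonneg_of_psd {A : Matrix (Fin 3) (Fin 3) ℝ} (hA : A.PosSemidef) :
    0 ≤ A.trace := by
  have h : ∀ i, 0 ≤ A i i := fun i => by
    exact hA.diag_nonneg
  exact Finset.sum_nonneg fun i _ => h i

lemma psd_det_nonneg {A : Matrix (Fin 3) (Fin 3) ℝ} (hA : A.PosSemidef) : 0 ≤ A.det := by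
  rw [hA.isHermitian.det_eq_prod_eigenvalues]
  exact Finset.prod_nonneg fun i _ => by simpa using hA.eigenvalues_nonneg i


lemma fsq_sub_one_le {P : Matrix (Fin 3) (Fin 3) ℝ} (hP : P.PosSemidef) :
    fsq (P - 1) ≤ fsq (P * P - 1) := by
  set A := P * P - 1 with hA
  have hPsymm : Pᵀ = P := by
    have := hP.isHermitian
    rwa [Matrix.IsHermitian, conjTranspose_eq_transpose_of_trivial] at this
  have hP1 : (P + 1).PosDef := Matrix.PosDef.posSemidef_add hP Matrix.PosDef.one
  have hdet : IsUnit (P + 1).det := hP1.det_pos.ne'.isUnit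
  set Q := (P + 1)⁻¹ with hQ
  have hQl : Q * (P + 1) = 1 := nonsing_inv_mul _ hdet
  have hQr : (P + 1) * Q = 1 := mul_nonsing_inv _ hdet
  have hQsymm : Qᵀ = Q := by
    rw [hQ, transpose_nonsing_inv, transpose_add, hPsymm, transpose_one]
  have hAsymm : Aᵀ = A := by rw [hA, transpose_sub, transpose_mul, hPsymm, transpose_one]
  have hfact : P - 1 = A * Q := by
    have h1 : (P - 1) * (P + 1) = A := by rw [hA]; noncomm_ring
    calc P - 1 = (P - 1) * ((P + 1) * Q) := by rw [hQr, mul_one]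
      _ = A * Q := by rw [← mul_assoc, h1]
  have hQQpsd : PosSemidef ((1 : Matrix (Fin 3) (Fin 3) ℝ) - Q * Q) := by
    have hQQ : (1 : Matrix (Fin 3) (Fin 3) ℝ) - Q * Q = Q * (P*P + P + P) * Q := by
      have h2 : (P + 1) * (P + 1) - 1 = P*P + P + P := by noncomm_ring
      calc (1 : Matrix (Fin 3) (Fin 3) ℝ) - Q*Q
          = (Q * (P+1)) * ((P+1) * Q) - Q * Q := by rw [hQl, hQr, one_mul]
        _ = Q * ((P+1)*(P+1) - 1) * Q := by noncomm_ring
        _ = Q * (P*P + P + P) * Q := by rw [h2]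
    rw [hQQ]
    have hPP : PosSemidef (P * P) := by have := hP.pow 2; rwa [pow_two] at this
    have hsum : PosSemidef (P*P + P + P) := (hPP.add hP).add hP
    have := hsum.conjTranspose_mul_mul_same Q
    rwa [conjTranspose_eq_transpose_of_trivial, hQsymm] at this
  have key : 0 ≤ Matrix.trace (A * ((1 : Matrix (Fin 3) (Fin 3) ℝ) - Q*Q) * A) := by
    have := hQQpsd.mul_mul_conjTranspose_same A
    rw [conjTranspose_eq_transpose_of_trivial, hAsymm] at this
    exact trace_nonneg_of_psd this
  have key2 : Matrix.trace (A * ((1 : Matrix (Fin 3) (Fin 3) ℝ) - Q*Q) * A)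
      = Matrix.trace (A * A) - Matrix.trace ((A * A) * (Q * Q)) := by
    have h3 : A * ((1 : Matrix (Fin 3) (Fin 3) ℝ) - Q*Q) * A
        = A * A - (A * (Q * Q)) * A := by noncomm_ring
    rw [h3, trace_sub, trace_mul_cycle A (Q * Q) A]
  rw [fsq_eq_trace, fsq_eq_trace, hfact]
  have e1 : (A*Q)ᵀ * (A*Q) = Q * (A * A) * Q := by
    rw [transpose_mul, hAsymm, hQsymm]; noncomm_ring
  have e2 : Matrix.trace (Q * (A * A) * Q) = Matrix.trace ((A * A) * (Q * Q)) :=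
    (trace_mul_cycle Q (A * A) Q).trans (trace_mul_comm (Q * Q) (A * A))
  rw [e1, e2, hAsymm]
  linarith [key, key2]

lemma distSO3_nonneg (F : Matrix (Fin 3) (Fin 3) ℝ) : 0 ≤ distSO3 F :=
  Real.sInf_nonneg fun d ⟨R, _, _, hd⟩ => hd ▸ Real.sqrt_nonneg _

lemma distSO3_le (F R : Matrix (Fin 3) (Fin 3) ℝ) (h1 : Rᵀ * R = 1) (h2 : R.det = 1) :
    distSO3 F ≤ frobNorm (F - R) :=
  csInf_le ⟨0, fun d ⟨R', _, _, hd⟩ => hd ▸ Real.sqrt_nonneg _⟩ ⟨R, h1, h2, rfl⟩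

lemma dist_le_aux (F Sq : Matrix (Fin 3) (Fin 3) ℝ) (hSymm : Sq.IsSymm) (hPos : Sq.PosDef)
    (hF : 0 < F.det) :
    distSO3 (F * Sq⁻¹) ≤
      frobNorm Sq⁻¹ * frobNorm Sq⁻¹ * frobNorm (Fᵀ * F - Sq * Sq) := by
  set B := F * Sq⁻¹ with hB
  have hSqdet : IsUnit Sq.det := hPos.det_pos.ne'.isUnit
  have hSqT : Sqᵀ = Sq := hSymm
  have hSqiT : (Sq⁻¹)ᵀ = Sq⁻¹ := by rw [transpose_nonsing_inv, hSqT]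
  have hBt : Bᵀ = Sq⁻¹ * Fᵀ := by rw [hB, transpose_mul, hSqiT]
  have psd : PosSemidef (Bᵀ * B) := by
    have := posSemidef_conjTranspose_mul_self B
    rwa [conjTranspose_eq_transpose_of_trivial] at this
  obtain ⟨P, hPpsd, hPP'⟩ : ∃ P : Matrix (Fin 3) (Fin 3) ℝ, P.PosSemidef ∧ P * P = Bᵀ * B := by
    open scoped MatrixOrder in
    exact ⟨CFC.sqrt (Bᵀ * B), Matrix.nonneg_iff_posSemidef.mp (CFC.sqrt_nonneg _),
      CFC.sqrt_mul_sqrt_self _ psd.nonneg⟩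
  have hPT : Pᵀ = P := by
    have := hPpsd.isHermitian
    rwa [Matrix.IsHermitian, conjTranspose_eq_transpose_of_trivial] at this
  have hPP : P * P = Bᵀ * B := hPP'
  have hBdet : 0 < B.det := by
    rw [hB, det_mul, det_nonsing_inv, Ring.inverse_eq_inv']
    exact mul_pos hF (inv_pos.mpr hPos.det_pos)
  have hPdet : 0 < P.det := by
    have h2 : P.det * P.det = B.det * B.det := by
      rw [← det_mul, hPP, det_mul, det_transpose]
    have hnn := psd_det_nonneg hPpsd
    rcases hnn.lt_or_eq with h | h
    · exact h
    · exfalso; nlinarith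
  have hPunit : IsUnit P.det := hPdet.ne'.isUnit
  set R := B * P⁻¹ with hR
  have hPiT : (P⁻¹)ᵀ = P⁻¹ := by rw [transpose_nonsing_inv, hPT]
  have hRtR : Rᵀ * R = 1 := by
    rw [hR, transpose_mul, hPiT]
    calc P⁻¹ * Bᵀ * (B * P⁻¹) = P⁻¹ * (Bᵀ * B) * P⁻¹ := by noncomm_ring
      _ = P⁻¹ * (P * P) * P⁻¹ := by rw [hPP]
      _ = (P⁻¹ * P) * (P * P⁻¹) := by noncomm_ring
      _ = 1 := by rw [nonsing_inv_mul _ hPunit, mul_nonsing_inv _ hPunit, one_mul]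
  have hRdet : R.det = 1 := by
    have hpos : 0 < R.det := by
      rw [hR, det_mul, det_nonsing_inv, Ring.inverse_eq_inv']
      exact mul_pos hBdet (inv_pos.mpr hPdet)
    have hsq : R.det * R.det = 1 := by
      have := congrArg Matrix.det hRtR
      rwa [det_mul, det_transpose, det_one] at this
    nlinarith
  have hsub : B - R = R * (P - 1) := by
    have hRP : R * P = B := by rw [hR, mul_assoc, nonsing_inv_mul _ hPunit, mul_one]
    rw [mul_sub, mul_one, hRP]
  calc distSO3 B ≤ frobNorm (B - R) := distSO3_le B R hRtR hRdet
    _ = frobNorm (P - 1) := by rw [hsub, frobNorm_def, frobNorm_def, fsq_rot hRtR]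
    _ ≤ frobNorm (P*P - 1) := by
        rw [frobNorm_def, frobNorm_def]; exact Real.sqrt_le_sqrt (fsq_sub_one_le hPpsd)
    _ = frobNorm (Sq⁻¹ * (Fᵀ*F - Sq*Sq) * Sq⁻¹) := by
        congr 1
        rw [hPP, hBt, hB]
        have h1 : Sq⁻¹ * Sq = 1 := nonsing_inv_mul _ hSqdet
        have h2 : Sq * Sq⁻¹ = 1 := mul_nonsing_inv _ hSqdet
        calc Sq⁻¹ * Fᵀ * (F * Sq⁻¹) - 1
            = Sq⁻¹ * Fᵀ * (F * Sq⁻¹) - (Sq⁻¹ * Sq) * (Sq * Sq⁻¹) := by rw [h1, h2, one_mul]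
          _ = Sq⁻¹ * (Fᵀ*F - Sq*Sq) * Sq⁻¹ := by noncomm_ring
    _ ≤ frobNorm Sq⁻¹ * frobNorm Sq⁻¹ * frobNorm (Fᵀ*F - Sq*Sq) := by
        calc frobNorm (Sq⁻¹ * (Fᵀ*F - Sq*Sq) * Sq⁻¹)
            ≤ frobNorm (Sq⁻¹ * (Fᵀ*F - Sq*Sq)) * frobNorm Sq⁻¹ := frobNorm_mul_le _ _
          _ ≤ (frobNorm Sq⁻¹ * frobNorm (Fᵀ*F - Sq*Sq)) * frobNorm Sq⁻¹ :=
              mul_le_mul_of_nonneg_right (frobNorm_mul_le _ _) (frobNorm_nonneg _)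
          _ = _ := by ring

lemma thinFilm_eq (ω : Set (Fin 2 → ℝ)) (h : ℝ) :
    thinFilm ω h = (MeasurableEquiv.piFinSuccAbove (fun _ : Fin 3 => ℝ) (Fin.last 2)) ⁻¹'
      (Set.Ioo (-(h/2)) (h/2) ×ˢ ω) := by
  ext x
  have h2 : x (Fin.last 2) = x 2 := rfl
  simp only [thinFilm, Set.mem_preimage, MeasurableEquiv.piFinSuccAbove_apply,
    Set.mem_prod, Set.mem_Ioo, Set.mem_setOf_eq, Fin.succAbove_last, h2,
    Fin.insertNthEquiv, Equiv.coe_fn_symm_mk]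
  rw [abs_lt, and_comm]
  simp [Fin.succAbove_last_apply]
  intro _ _
  rw [show (2 : Fin 3) = Fin.last 2 from rfl, Fin.removeNth_last]
  exact Iff.rfl

lemma thinFilm_measurable (ω : Set (Fin 2 → ℝ)) (hω : MeasurableSet ω) (h : ℝ) :
    MeasurableSet (thinFilm ω h) := by
  rw [thinFilm_eq]
  exact (MeasurableEquiv.piFinSuccAbove (fun _ : Fin 3 => ℝ) (Fin.last 2)).measurable
    (measurableSet_Ioo.prod hω)

lemma thinFilm_volume (ω : Set (Fin 2 → ℝ)) (h : ℝ) (hh : 0 ≤ h) :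
    volume (thinFilm ω h) = ENNReal.ofReal h * volume ω := by
  rw [thinFilm_eq,
    (volume_preserving_piFinSuccAbove (fun _ : Fin 3 => ℝ) (Fin.last 2)).measure_preimage_equiv,
    Measure.volume_eq_prod, Measure.prod_prod, Real.volume_Ioo]
  congr 1
  rw [sub_neg_eq_add]
  congr 1
  ring

end EnergyAux

/-- upper-bound energy estimate. If `(∇u^h)ᵀ∇u^h = G + O(h^{n+1})` with
positive Jacobian determinant, then
`(1/h)∫_{Ω^h} W((∇u^h)G^{-1/2}) ≤ C' h^{2(n+1)} |ω|` for all small `h`. -/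
theorem upper_bound_energy_estimate
    (n : ℕ) (W : Matrix (Fin 3) (Fin 3) ℝ → ℝ)
    (hWnonneg : ∀ F, 0 ≤ W F)
    (hWframe : ∀ R F : Matrix (Fin 3) (Fin 3) ℝ, Rᵀ * R = 1 → R.det = 1 →
      W (R * F) = W F)
    (hWzero : ∀ R : Matrix (Fin 3) (Fin 3) ℝ, Rᵀ * R = 1 → R.det = 1 → W R = 0)
    (Cw ρ : ℝ) (hρ : 0 < ρ)
    (hWgrowth : ∀ F, distSO3 F ≤ ρ → W F ≤ Cw * (distSO3 F) ^ 2)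
    (ω : Set (Fin 2 → ℝ)) (hωmeas : MeasurableSet ω) (hωbdd : Bornology.IsBounded ω)
    (G : (Fin 3 → ℝ) → Matrix (Fin 3) (Fin 3) ℝ)
    (hGsmooth : ∀ a b : Fin 3, ContDiff ℝ (⊤ : ℕ∞) (fun x => G x a b))
    (hGsymm : ∀ x, (G x).IsSymm) (hGpos : ∀ x, (G x).PosDef)
    (sq : (Fin 3 → ℝ) → Matrix (Fin 3) (Fin 3) ℝ)
    (hsq : ∀ x, (sq x).IsSymm ∧ (sq x).PosDef ∧ sq x * sq x = G x)
    (u : ℝ → (Fin 3 → ℝ) → Fin 3 → ℝ)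
    (husmooth : ∀ h : ℝ, ∀ a : Fin 3, ContDiff ℝ (⊤ : ℕ∞) (fun x => u h x a))
    (C₀ : ℝ) (hC₀ : 0 < C₀)
    (hstrain : ∀ h : ℝ, 0 < h → ∀ x ∈ thinFilm ω h, ∀ a b : Fin 3,
      |((grad3 (u h) x)ᵀ * grad3 (u h) x - G x) a b| ≤ C₀ * h ^ (n+1))
    (hdet : ∀ h : ℝ, 0 < h → ∀ x ∈ thinFilm ω h, 0 < (grad3 (u h) x).det) :
    ∃ C' > (0:ℝ), ∃ h₀ > (0:ℝ), ∀ h : ℝ, 0 < h → h < h₀ →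
      (1/h) * ∫ x in thinFilm ω h, W (grad3 (u h) x * (sq x)⁻¹) ≤
        C' * h ^ (2*(n+1)) * (volume ω).toReal := by
  classical
  obtain ⟨r₀, hr₀⟩ := hωbdd.subset_closedBall (0 : Fin 2 → ℝ)
  set r : ℝ := max r₀ 1 with hr
  have hr1 : (1:ℝ) ≤ r := le_max_right _ _
  set K : Set (Fin 3 → ℝ) := Metric.closedBall 0 r with hK
  have hKcomp : IsCompact K := isCompact_closedBall _ _
  set φ : (Fin 3 → ℝ) → ℝ :=
    fun x => ((G x).det)⁻¹ * Matrix.trace ((G x).adjugate) with hφ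
  have hGc : Continuous G := continuous_matrix fun a b => (hGsmooth a b).continuous
  have φcont : Continuous φ :=
    ((hGc.matrix_det).inv₀ fun x => (hGpos x).det_pos.ne').mul
      (hGc.matrix_adjugate.matrix_trace)
  have hK0 : (0 : Fin 3 → ℝ) ∈ K := Metric.mem_closedBall_self (by linarith)
  obtain ⟨x₀, hx₀K, hx₀max⟩ := hKcomp.exists_isMaxOn ⟨0, hK0⟩ φcont.continuousOn
  set Ms : ℝ := Real.sqrt (φ x₀) with hMs
  have hMs0 : 0 ≤ Ms := Real.sqrt_nonneg _
  have hfrob : ∀ x ∈ K, frobNorm (sq x)⁻¹ ≤ Ms := by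
    intro x hx
    have hsx := hsq x
    have hT : ((sq x)⁻¹)ᵀ = (sq x)⁻¹ := by rw [Matrix.transpose_nonsing_inv, hsx.1]
    have h1 : EnergyAux.fsq ((sq x)⁻¹) = φ x := by
      rw [EnergyAux.fsq_eq_trace, hT, ← Matrix.mul_inv_rev, hsx.2.2, hφ]
      rw [Matrix.inv_def, Matrix.trace_smul, Ring.inverse_eq_inv', smul_eq_mul]
    rw [EnergyAux.frobNorm_def, h1, hMs]
    exact Real.sqrt_le_sqrt (hx₀max hx)
  have hmem : ∀ h : ℝ, 0 < h → h ≤ 1 → ∀ x ∈ thinFilm ω h, x ∈ K := by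
    intro h hh h1 x hx
    obtain ⟨hx1, hx2⟩ := hx
    rw [hK, Metric.mem_closedBall, dist_zero_right]
    refine (pi_norm_le_iff_of_nonneg (by linarith)).mpr fun i => ?_
    induction i using Fin.lastCases with
    | last =>
      have h2 : x (Fin.last 2) = x 2 := rfl
      rw [Real.norm_eq_abs, h2]
      have h3 : |x 2| < h / 2 := hx2
      linarith
    | cast j =>
      have h4 := hr₀ hx1
      rw [Metric.mem_closedBall, dist_zero_right] at h4
      have h5 := norm_le_pi_norm (fun i : Fin 2 => x i.castSucc) j
      calc ‖x j.castSucc‖ = ‖(fun i : Fin 2 => x i.castSucc) j‖ := rfl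
        _ ≤ ‖(fun i : Fin 2 => x i.castSucc)‖ := h5
        _ ≤ r₀ := h4
        _ ≤ r := le_max_left _ _
  set Cd : ℝ := Ms * Ms * (3 * C₀) with hCd
  have hCd0 : 0 ≤ Cd := by positivity
  set Cb : ℝ := max Cw 0 * Cd^2 with hCb
  have hCb0 : 0 ≤ Cb := by positivity
  refine ⟨Cb + 1, by linarith, min 1 (ρ / (Cd + 1)),
    lt_min one_pos (div_pos hρ (by linarith)), ?_⟩
  intro h hh hlt
  have h1 : h ≤ 1 := le_of_lt (lt_of_lt_of_le hlt (min_le_left _ _))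
  have hρ' : h < ρ / (Cd + 1) := lt_of_lt_of_le hlt (min_le_right _ _)
  have hpt : ∀ x ∈ thinFilm ω h,
      W (grad3 (u h) x * (sq x)⁻¹) ≤ Cb * h ^ (2*(n+1)) := by
    intro x hx
    have hxK := hmem h hh h1 x hx
    have hsx := hsq x
    have hE : frobNorm ((grad3 (u h) x)ᵀ * grad3 (u h) x - sq x * sq x)
        ≤ 3 * (C₀ * h^(n+1)) := by
      apply EnergyAux.frobNorm_le_of_entry_le (by positivity)
      intro i j
      rw [hsx.2.2]
      exact hstrain h hh x hx i j
    have hdist : distSO3 (grad3 (u h) x * (sq x)⁻¹) ≤ Cd * h^(n+1) := by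
      calc distSO3 (grad3 (u h) x * (sq x)⁻¹)
          ≤ frobNorm (sq x)⁻¹ * frobNorm (sq x)⁻¹ *
            frobNorm ((grad3 (u h) x)ᵀ * grad3 (u h) x - sq x * sq x) :=
            EnergyAux.dist_le_aux _ _ hsx.1 hsx.2.1 (hdet h hh x hx)
        _ ≤ Ms * Ms * (3 * (C₀ * h^(n+1))) := by
            have ha := hfrob x hxK
            have hf0 := EnergyAux.frobNorm_nonneg ((sq x)⁻¹)
            have hE0 := EnergyAux.frobNorm_nonneg
              ((grad3 (u h) x)ᵀ * grad3 (u h) x - sq x * sq x)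
            have hb0 : (0:ℝ) ≤ 3 * (C₀ * h^(n+1)) := by positivity
            exact mul_le_mul (mul_le_mul ha ha hf0 hMs0) hE hE0 (mul_nonneg hMs0 hMs0)
        _ = Cd * h^(n+1) := by rw [hCd]; ring
    have hdρ : distSO3 (grad3 (u h) x * (sq x)⁻¹) ≤ ρ := by
      have hh1 : h^(n+1) ≤ h := by
        calc h^(n+1) ≤ h^1 := pow_le_pow_of_le_one hh.le h1 (by omega)
          _ = h := pow_one h
      have h5 : Cd * h^(n+1) ≤ Cd * h := mul_le_mul_of_nonneg_left hh1 hCd0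
      have h6 : h * (Cd + 1) < ρ := (lt_div_iff₀ (by linarith)).mp hρ'
      nlinarith
    have hd0 := EnergyAux.distSO3_nonneg (grad3 (u h) x * (sq x)⁻¹)
    calc W (grad3 (u h) x * (sq x)⁻¹)
        ≤ Cw * (distSO3 (grad3 (u h) x * (sq x)⁻¹))^2 := hWgrowth _ hdρ
      _ ≤ max Cw 0 * (distSO3 (grad3 (u h) x * (sq x)⁻¹))^2 :=
          mul_le_mul_of_nonneg_right (le_max_left _ _) (sq_nonneg _)
      _ ≤ max Cw 0 * (Cd * h^(n+1))^2 :=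
          mul_le_mul_of_nonneg_left (pow_le_pow_left₀ hd0 hdist 2) (le_max_right _ _)
      _ = Cb * h ^ (2*(n+1)) := by
          rw [hCb, mul_pow, ← pow_mul, Nat.mul_comm (n+1) 2]; ring
  have hvol : volume (thinFilm ω h) = ENNReal.ofReal h * volume ω :=
    EnergyAux.thinFilm_volume ω h hh.le
  have hωfin : volume ω < ⊤ := hωbdd.measure_lt_top
  have hfin : volume (thinFilm ω h) < ⊤ := by
    rw [hvol]
    exact ENNReal.mul_lt_top ENNReal.ofReal_lt_top hωfin
  have hint : (∫ x in thinFilm ω h, W (grad3 (u h) x * (sq x)⁻¹)) ≤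
      (Cb * h ^ (2*(n+1))) * (volume (thinFilm ω h)).toReal := by
    have hb := norm_setIntegral_le_of_norm_le_const
      (f := fun x => W (grad3 (u h) x * (sq x)⁻¹)) hfin
      (fun x hx => by
        rw [Real.norm_eq_abs, abs_of_nonneg (hWnonneg _)]; exact hpt x hx)
    rw [Real.norm_eq_abs] at hb
    exact (le_abs_self _).trans hb
  have htoReal : (volume (thinFilm ω h)).toReal = h * (volume ω).toReal := by
    rw [hvol, ENNReal.toReal_mul, ENNReal.toReal_ofReal hh.le]
  rw [htoReal] at hint
  have hfinal : (1/h) * (∫ x in thinFilm ω h, W (grad3 (u h) x * (sq x)⁻¹)) ≤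
      (1/h) * ((Cb * h ^ (2*(n+1))) * (h * (volume ω).toReal)) :=
    mul_le_mul_of_nonneg_left hint (by positivity)
  have hne : h ≠ 0 := hh.ne'
  calc (1/h) * (∫ x in thinFilm ω h, W (grad3 (u h) x * (sq x)⁻¹))
      ≤ (1/h) * ((Cb * h ^ (2*(n+1))) * (h * (volume ω).toReal)) := hfinal
    _ = Cb * h ^ (2*(n+1)) * (volume ω).toReal := by field_simp
    _ ≤ (Cb+1) * h^(2*(n+1)) * (volume ω).toReal := by
        have hp : (0:ℝ) ≤ h^(2*(n+1)) * (volume ω).toReal := by positivity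
        nlinarith
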